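/- arXiv:2602.17274 — 2 statements merged into one kernel-verified Lean document; each statement's English description precedes it below -/
import Mathlib

section
/- There exist constants C, μ₀ > 0 (depending on γ) such that for all 0 < μ < μ₀: the ratio E[(x̂_{Tik,P} − x⋆)²] / (μ/(s·a)²) differs from (2/(1+√(1+4γ)))² by at most C·μ, where x̂_{Tik,P}(y) = (−s·a+√((s·a)²+4τ·y))/(2τ), y ~ Poisson(μ), μ = s·a·x⋆, γ = τ/(s·a)². -/
/-- Poisson probability mass function with mean `μ`. -/
noncomputable def ppmf (μ : ℝ) (k : ℕ) : ℝ := Real.exp (-μ) * μ ^ k / (Nat.factorial k)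

set_option maxHeartbeats 4000000 in
/-- Low-dose expansion of the Poisson MAP (Tikhonov) per-mode MSE ratio: there exist
`C, μ₀ > 0` such that for all `0 < μ < μ₀` (with `μ = s a x⋆`), the ratio
`E[(x̂_{Tik,P}(y) − x⋆)²] / (μ/(sa)²)` differs from `(2/(1+√(1+4γ)))²` by at most `Cμ`,
where `x̂_{Tik,P}(k) = (−sa + √((sa)² + 4τk))/(2τ)` and `γ = τ/(sa)²`. -/
theorem poisson_tikhonov_low_dose_ratio (s a τ : ℝ) (hs : 0 < s) (ha : 0 < a)
    (hτ : 0 < τ) :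
    ∃ C > (0 : ℝ), ∃ μ₀ > (0 : ℝ), ∀ xstar : ℝ, 0 < xstar → s * a * xstar < μ₀ →
      |(∑' k : ℕ,
          ((-(s * a) + Real.sqrt ((s * a) ^ 2 + 4 * τ * k)) / (2 * τ) - xstar) ^ 2 *
            ppmf (s * a * xstar) k) /
          ((s * a * xstar) / (s * a) ^ 2)
        - (2 / (1 + Real.sqrt (1 + 4 * (τ / (s * a) ^ 2)))) ^ 2|
        ≤ C * (s * a * xstar) := by
  have hb : 0 < s * a := mul_pos hs ha
  set b : ℝ := s * a with hbdef
  set γ : ℝ := τ / b ^ 2 with hγdef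
  have hγ : 0 < γ := div_pos hτ (by positivity)
  set r : ℝ := Real.sqrt (1 + 4 * γ) with hrdef
  have hr2 : r ^ 2 = 1 + 4 * γ := Real.sq_sqrt (by positivity)
  have hr1 : 1 ≤ r := by nlinarith [Real.sqrt_nonneg (1 + 4 * γ)]
  set T : ℝ := 2 / (1 + r) with hTdef
  have hT0 : 0 < T := by positivity
  have hT1 : T ≤ 1 := by
    rw [hTdef, div_le_one (by linarith)]; linarith
  set K : ℝ := ∑' k : ℕ, (4 : ℝ) ^ k / (Nat.factorial k) with hKdef
  have hKsum : Summable (fun k : ℕ => (4 : ℝ) ^ k / (Nat.factorial k)) :=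
    Real.summable_pow_div_factorial 4
  have hK0 : 0 ≤ K := tsum_nonneg (fun k => by positivity)
  have hbγ : b ^ 2 * γ = τ := by rw [hγdef]; field_simp
  -- estimator basic facts
  have hf_nonneg : ∀ k : ℕ, 0 ≤ (-b + Real.sqrt (b ^ 2 + 4 * τ * k)) / (2 * τ) := by
    intro k
    have hk : (0:ℝ) ≤ (k:ℝ) := Nat.cast_nonneg k
    have h1 : b ≤ Real.sqrt (b ^ 2 + 4 * τ * k) :=
      (Real.le_sqrt hb.le (by positivity)).mpr (by nlinarith [mul_nonneg hτ.le hk])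
    apply div_nonneg (by linarith) (by positivity)
  have hf_le : ∀ k : ℕ, (-b + Real.sqrt (b ^ 2 + 4 * τ * k)) / (2 * τ) ≤ k / b := by
    intro k
    have hk : (0:ℝ) ≤ (k:ℝ) := Nat.cast_nonneg k
    have h1 : Real.sqrt (b ^ 2 + 4 * τ * k) ≤ b + 2 * τ * k / b := by
      rw [show b + 2 * τ * k / b = Real.sqrt ((b + 2 * τ * k / b) ^ 2) from
        (Real.sqrt_sq (by positivity)).symm]
      apply Real.sqrt_le_sqrt
      have hkey : (b + 2 * τ * (k:ℝ) / b) ^ 2 = b ^ 2 + 4 * τ * k + (2 * τ * (k:ℝ) / b) ^ 2 := by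
        field_simp; ring
      nlinarith [sq_nonneg (2 * τ * (k:ℝ) / b)]
    rw [div_le_div_iff₀ (by positivity) hb]
    calc (-b + Real.sqrt (b ^ 2 + 4 * τ * k)) * b
        ≤ (-b + (b + 2 * τ * k / b)) * b := by
          apply mul_le_mul_of_nonneg_right _ hb.le
          linarith
      _ = ↑k * (2 * τ) := by field_simp; ring
  -- the key value at k = 1
  have hf1 : (-b + Real.sqrt (b ^ 2 + 4 * τ * (1:ℕ))) / (2 * τ) = T / b := by
    have hbr : Real.sqrt (b ^ 2 + 4 * τ * ((1:ℕ):ℝ)) = b * r := by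
      rw [show b ^ 2 + 4 * τ * ((1:ℕ):ℝ) = (b * r) ^ 2 by
        push_cast
        linear_combination (-(b^2)) * hr2 - 4 * hbγ]
      exact Real.sqrt_sq (by positivity)
    rw [hbr, hTdef, div_div, div_eq_div_iff (by positivity) (by positivity)]
    linear_combination (b^2) * hr2 + 4 * hbγ
  clear_value b γ r T K
  refine ⟨3 + 2 * T + 16 * K, by positivity, 1, one_pos, ?_⟩
  intro xstar hx hμ1
  set μ : ℝ := b * xstar with hμdef
  have hμ : 0 < μ := mul_pos hb hx
  have hμ1' : μ < 1 := hμ1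
  clear_value μ
  set F : ℕ → ℝ := fun k =>
    ((-b + Real.sqrt (b ^ 2 + 4 * τ * k)) / (2 * τ) - xstar) ^ 2 * ppmf μ k with hFdef
  clear_value F
  have hppmf_nonneg : ∀ k, 0 ≤ ppmf μ k := by
    intro k; unfold ppmf; positivity
  have hF_nonneg : ∀ k, 0 ≤ F k := by
    intro k
    simp only [hFdef]
    exact mul_nonneg (sq_nonneg _) (hppmf_nonneg k)
  have hppmf_le : ∀ k, ppmf μ k ≤ μ ^ k / (Nat.factorial k) := by
    intro k
    unfold ppmf
    have he : Real.exp (-μ) ≤ 1 := Real.exp_le_one_iff.mpr (by linarith)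
    have h1 : (0:ℝ) < (Nat.factorial k : ℝ) := by positivity
    have h2 : (0:ℝ) ≤ μ ^ k := by positivity
    rw [div_le_div_iff₀ h1 h1]
    have := mul_le_mul_of_nonneg_right (mul_le_mul_of_nonneg_right he h2) h1.le
    nlinarith [this]
  -- pointwise bound on F, for summability
  have hFle : ∀ k : ℕ, F k ≤ 2 / b ^ 2 * ((4*μ) ^ k / (Nat.factorial k))
      + 2 * xstar ^ 2 * (μ ^ k / (Nat.factorial k)) := by
    intro k
    have hsq : ((-b + Real.sqrt (b ^ 2 + 4 * τ * k)) / (2 * τ) - xstar) ^ 2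
        ≤ 2 * (k:ℝ)^2 / b^2 + 2 * xstar ^ 2 := by
      have h1 := hf_nonneg k
      have h2 := hf_le k
      have hk : (0:ℝ) ≤ (k:ℝ) := Nat.cast_nonneg k
      have h3 : ((-b + Real.sqrt (b ^ 2 + 4 * τ * k)) / (2 * τ))^2 ≤ (k:ℝ)^2/b^2 := by
        rw [← div_pow]; exact pow_le_pow_left₀ h1 h2 2
      have h4 := sq_nonneg ((-b + Real.sqrt (b ^ 2 + 4 * τ * k)) / (2 * τ) + xstar)
      ring_nf
      ring_nf at h3 h4
      linarith
    have hk4 : (k:ℝ)^2 ≤ 4 ^ k := by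
      have h2 : (k:ℝ) ≤ 2 ^ k := by exact_mod_cast (Nat.lt_two_pow_self (n := k)).le
      have hk : (0:ℝ) ≤ (k:ℝ) := Nat.cast_nonneg k
      have h4 : ((2:ℝ)^k)^2 = 4 ^ k := by
        rw [← pow_mul, mul_comm k 2, pow_mul]; norm_num
      nlinarith
    calc F k ≤ (2 * (k:ℝ)^2 / b^2 + 2 * xstar ^ 2) * ppmf μ k := by
          simp only [hFdef]
          exact mul_le_mul_of_nonneg_right hsq (hppmf_nonneg k)
      _ ≤ (2 * (k:ℝ)^2 / b^2 + 2 * xstar ^ 2) * (μ ^ k / (Nat.factorial k)) := by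
          apply mul_le_mul_of_nonneg_left (hppmf_le k) (by positivity)
      _ ≤ 2 / b ^ 2 * ((4*μ) ^ k / (Nat.factorial k))
          + 2 * xstar ^ 2 * (μ ^ k / (Nat.factorial k)) := by
          rw [mul_pow, add_mul]
          have h2 : (0:ℝ) ≤ μ ^ k / (Nat.factorial k) := by positivity
          have h3 : 2 * (k:ℝ)^2 / b^2 * (μ ^ k / (Nat.factorial k))
              ≤ 2 / b ^ 2 * (4 ^ k * μ ^ k / (Nat.factorial k)) := by
            have he : 2 / b ^ 2 * ((4:ℝ) ^ k * μ ^ k / (Nat.factorial k))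
                = 2 * (4:ℝ)^k / b^2 * (μ ^ k / (Nat.factorial k)) := by ring
            rw [he]
            apply mul_le_mul_of_nonneg_right _ h2
            exact (div_le_div_iff_of_pos_right (by positivity : (0:ℝ) < b^2)).mpr (by nlinarith [hk4])
          linarith [h3]
  have hGsum : Summable (fun k : ℕ => 2 / b ^ 2 * ((4*μ) ^ k / (Nat.factorial k))
      + 2 * xstar ^ 2 * (μ ^ k / (Nat.factorial k))) :=
    ((Real.summable_pow_div_factorial (4*μ)).mul_left _).add
      ((Real.summable_pow_div_factorial μ).mul_left _)
  have hFsum : Summable F := Summable.of_nonneg_of_le hF_nonneg hFle hGsum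
  have hFsum1 : Summable (fun k => F (k + 1)) := (summable_nat_add_iff 1).mpr hFsum
  have hFsum2 : Summable (fun k => F (k + 2)) := (summable_nat_add_iff 2).mpr hFsum
  -- split the series
  have hsplit : ∑' k, F k = F 0 + F 1 + ∑' k, F (k + 2) := by
    rw [Summable.tsum_eq_zero_add hFsum, Summable.tsum_eq_zero_add hFsum1]
    norm_num [add_assoc]
  have hF0 : F 0 = xstar ^ 2 * Real.exp (-μ) := by
    have hp : ppmf μ 0 = Real.exp (-μ) := by simp [ppmf]
    simp only [hFdef, Nat.cast_zero, mul_zero, add_zero, Real.sqrt_sq hb.le, hp]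
    ring
  have hF1 : F 1 = (T / b - xstar) ^ 2 * (Real.exp (-μ) * μ) := by
    simp only [hFdef]
    rw [hf1]
    simp [ppmf]
  -- tail bound
  have hterm : ∀ k : ℕ, F (k+2) ≤ 16 * μ^2 / b^2 * ((4:ℝ)^k / (Nat.factorial k)) := by
    intro k
    have h1 := hf_nonneg (k+2)
    have h2 := hf_le (k+2)
    have hc : (((k+2:ℕ)):ℝ) = (k:ℝ)+2 := by push_cast; ring
    have hx' : xstar ≤ 1 / b := by
      rw [le_div_iff₀ hb]; nlinarith
    set f : ℝ := (-b + Real.sqrt (b ^ 2 + 4 * τ * ((k+2:ℕ)))) / (2 * τ) with hfdef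
    have hkc : (0:ℝ) ≤ (k:ℝ) := Nat.cast_nonneg k
    have habs : |f - xstar| ≤ ((k:ℝ)+3)/b := by
      rw [abs_le]
      constructor
      · have h1b : (1:ℝ)/b ≤ ((k:ℝ)+3)/b := (div_le_div_iff_of_pos_right hb).mpr (by linarith)
        linarith
      · have h2' : f ≤ ((k:ℝ)+2)/b := by rw [← hc]; exact h2
        have h2b : ((k:ℝ)+2)/b ≤ ((k:ℝ)+3)/b := (div_le_div_iff_of_pos_right hb).mpr (by linarith)
        linarith
    have hsq : (f - xstar) ^ 2 ≤ (((k:ℝ)+3)/b)^2 := by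
      rw [← sq_abs]
      exact pow_le_pow_left₀ (abs_nonneg _) habs 2
    have hppmf2 : ppmf μ (k+2) ≤ μ^2 / (Nat.factorial k) := by
      have hA : ppmf μ (k+2) ≤ μ ^ (k+2) / (Nat.factorial (k+2)) := hppmf_le (k+2)
      have hfact : (Nat.factorial k : ℝ) ≤ (Nat.factorial (k+2) : ℝ) := by
        exact_mod_cast Nat.factorial_le (by omega)
      have hμk : μ ^ k ≤ 1 := pow_le_one₀ hμ.le hμ1'.le
      have hB : μ ^ (k+2) ≤ μ ^ 2 := by
        calc μ ^ (k+2) = μ^2 * μ^k := by ring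
          _ ≤ μ^2 * 1 := by nlinarith [sq_nonneg μ]
          _ = μ^2 := by ring
      calc ppmf μ (k+2) ≤ μ ^ (k+2) / (Nat.factorial (k+2)) := hA
        _ ≤ μ ^ 2 / (Nat.factorial (k+2)) := by gcongr
        _ ≤ μ ^ 2 / (Nat.factorial k) := by gcongr
    have hk3 : ((k:ℝ)+3)^2 ≤ 16 * 4^k := by
      have h2k : (k:ℝ)+1 ≤ 2 ^ k := by exact_mod_cast Nat.lt_two_pow_self (n := k)
      have h4 : ((2:ℝ)^k)^2 = 4 ^ k := by
        rw [← pow_mul, mul_comm k 2, pow_mul]; norm_num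
      have hk : (0:ℝ) ≤ (k:ℝ) := Nat.cast_nonneg k
      nlinarith
    calc F (k+2) = (f - xstar)^2 * ppmf μ (k+2) := by simp only [hFdef, hfdef]
      _ ≤ (((k:ℝ)+3)/b)^2 * (μ^2 / (Nat.factorial k)) :=
          mul_le_mul hsq hppmf2 (hppmf_nonneg _) (by positivity)
      _ = ((k:ℝ)+3)^2 * (μ^2 / (Nat.factorial k)) / b^2 := by rw [div_pow]; ring
      _ ≤ 16 * 4^k * (μ^2 / (Nat.factorial k)) / b^2 := by gcongr
      _ = 16 * μ^2 / b^2 * ((4:ℝ)^k / (Nat.factorial k)) := by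
          field_simp
  have htail : ∑' k, F (k + 2) ≤ 16 * μ ^ 2 / b ^ 2 * K := by
    calc ∑' k, F (k + 2) ≤ ∑' k : ℕ, 16 * μ^2 / b^2 * ((4:ℝ)^k / (Nat.factorial k)) :=
          Summable.tsum_le_tsum hterm hFsum2 (hKsum.mul_left _)
      _ = 16 * μ ^ 2 / b ^ 2 * K := by rw [hKdef, tsum_mul_left]
  have htail0 : 0 ≤ ∑' k, F (k + 2) := tsum_nonneg (fun k => hF_nonneg _)
  set Rt : ℝ := ∑' k, F (k + 2) with hRtdef
  clear_value Rt
  have hratio : (∑' k, F k) / (μ / b ^ 2)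
      = μ * Real.exp (-μ) + (T - μ) ^ 2 * Real.exp (-μ) + Rt * b ^ 2 / μ := by
    rw [hsplit, hF0, hF1, hμdef]
    have hbne : b ≠ 0 := hb.ne'
    have hxne : xstar ≠ 0 := hx.ne'
    field_simp
  have heta : tsum F = ∑' k, F k := rfl
  rw [heta, hratio]
  -- final estimates
  have he1 : Real.exp (-μ) ≤ 1 := Real.exp_le_one_iff.mpr (by linarith)
  have he2 : 1 - μ ≤ Real.exp (-μ) := by nlinarith [Real.add_one_le_exp (-μ)]
  have he0 : 0 < Real.exp (-μ) := Real.exp_pos _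
  have hX : 0 ≤ μ * Real.exp (-μ) := by positivity
  have hXle : μ * Real.exp (-μ) ≤ μ := by nlinarith
  have hZ : 0 ≤ Rt * b ^ 2 / μ := by positivity
  have hZle : Rt * b ^ 2 / μ ≤ 16 * K * μ := by
    calc Rt * b ^ 2 / μ ≤ (16 * μ ^ 2 / b ^ 2 * K) * b ^ 2 / μ := by gcongr
      _ = 16 * K * μ := by field_simp
  have hY : |(T - μ) ^ 2 * Real.exp (-μ) - T ^ 2| ≤ (2 + 2 * T) * μ := by
    have hsq1 : (T - μ)^2 ≤ 1 := by
      nlinarith [mul_nonneg hT0.le hμ.le, mul_le_mul_of_nonneg_left hT1 hT0.le,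
        mul_le_mul_of_nonneg_left hμ1'.le hμ.le]
    have hp2 : (T - μ)^2 * (1 - μ) ≤ (T - μ)^2 * Real.exp (-μ) :=
      mul_le_mul_of_nonneg_left he2 (sq_nonneg _)
    have hp1 : (T - μ)^2 * Real.exp (-μ) ≤ (T - μ)^2 * 1 :=
      mul_le_mul_of_nonneg_left he1 (sq_nonneg _)
    have hp3 : μ * (T - μ)^2 ≤ μ * 1 := mul_le_mul_of_nonneg_left hsq1 hμ.le
    have hμμ : μ * μ ≤ μ * 1 := mul_le_mul_of_nonneg_left hμ1'.le hμ.le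
    have hTμ : 0 ≤ T * μ := mul_nonneg hT0.le hμ.le
    rw [abs_le]
    constructor
    · ring_nf
      ring_nf at hp2 hp3
      linarith [hp2, hp3, sq_nonneg μ, hμ.le]
    · ring_nf
      ring_nf at hp1 hμμ
      linarith [hp1, hμμ, hTμ]
  calc |μ * Real.exp (-μ) + (T - μ) ^ 2 * Real.exp (-μ) + Rt * b ^ 2 / μ - T ^ 2|
      = |(μ * Real.exp (-μ)) + ((T - μ) ^ 2 * Real.exp (-μ) - T ^ 2) + (Rt * b ^ 2 / μ)| := by
        ring_nf
    _ ≤ |(μ * Real.exp (-μ)) + ((T - μ) ^ 2 * Real.exp (-μ) - T ^ 2)| + |Rt * b ^ 2 / μ| :=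
        abs_add_le _ _
    _ ≤ |μ * Real.exp (-μ)| + |(T - μ) ^ 2 * Real.exp (-μ) - T ^ 2| + |Rt * b ^ 2 / μ| := by
        have := abs_add_le (μ * Real.exp (-μ)) ((T - μ) ^ 2 * Real.exp (-μ) - T ^ 2)
        linarith
    _ ≤ μ + (2 + 2 * T) * μ + 16 * K * μ := by
        rw [abs_of_nonneg hX, abs_of_nonneg hZ]
        linarith [hY]
    _ = (3 + 2 * T + 16 * K) * μ := by ring
end

section
/- Let y ~ Poisson(μ) with μ = s·a·x⋆ and fix τ > 0. Let x̂(k) = (−s·a + √((s·a)² + 4τk))/(2τ) and h = x̂(1). Then E[(x̂(y) − x⋆)²] ≤ x⋆² + μ(h² − 2hx⋆) + 2μ²(h² + x⋆²) + 4μ²/(s·a)² + x⋆²μ², for all μ ∈ (0,1). -/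
set_option maxHeartbeats 1000000


lemma ppmf_nonneg {μ : ℝ} (hμ : 0 ≤ μ) (k : ℕ) : 0 ≤ ppmf μ k := by
  unfold ppmf
  positivity

lemma tsum_ppmf {μ : ℝ} : (∑' k : ℕ, ppmf μ k) = 1 := by
  have h1 : (∑' k : ℕ, μ ^ k / (Nat.factorial k)) = Real.exp μ := by
    rw [Real.exp_eq_exp_ℝ, NormedSpace.exp_eq_tsum_div]
  have h2 : ∀ k : ℕ, ppmf μ k = Real.exp (-μ) * (μ ^ k / (Nat.factorial k)) := by
    intro k; unfold ppmf; ring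
  calc (∑' k : ℕ, ppmf μ k) = ∑' k : ℕ, Real.exp (-μ) * (μ ^ k / (Nat.factorial k)) := by
        exact tsum_congr h2
    _ = Real.exp (-μ) * ∑' k : ℕ, μ ^ k / (Nat.factorial k) := tsum_mul_left
    _ = Real.exp (-μ) * Real.exp μ := by rw [h1]
    _ = 1 := by rw [← Real.exp_add]; simp

lemma summable_ppmf {μ : ℝ} : Summable (fun k : ℕ => ppmf μ k) := by
  have : (fun k : ℕ => ppmf μ k) = fun k : ℕ =>
      Real.exp (-μ) * (μ ^ k / (Nat.factorial k)) := by
    funext k; unfold ppmf; ring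
  rw [this]
  exact (Real.summable_pow_div_factorial μ).mul_left _

/-- MSE bound for the one-dimensional Poisson MAP (Tikhonov) estimator,
`x̂(k) = (−sa + √((sa)² + 4τk))/(2τ)`, `h = x̂(1)`, `y ~ Poisson(μ)`, `μ = s a x⋆ ∈ (0,1)`:
`E[(x̂(y) − x⋆)²] ≤ x⋆² + μ(h² − 2hx⋆) + 2μ²(h² + x⋆²) + 4μ²/(sa)² + x⋆²μ²`. -/
theorem poisson_tikhonov_mse_bound (s a xstar τ : ℝ) (hs : 0 < s) (ha : 0 < a)
    (hx : 0 < xstar) (hτ : 0 < τ)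
    (hμ1 : s * a * xstar < 1) :
    let μ := s * a * xstar
    let xhat : ℕ → ℝ := fun k => (-(s * a) + Real.sqrt ((s * a) ^ 2 + 4 * τ * k)) / (2 * τ)
    let h := xhat 1
    (∑' k : ℕ, (xhat k - xstar) ^ 2 * ppmf μ k)
      ≤ xstar ^ 2 + μ * (h ^ 2 - 2 * h * xstar) + 2 * μ ^ 2 * (h ^ 2 + xstar ^ 2)
        + 4 * μ ^ 2 / (s * a) ^ 2 + xstar ^ 2 * μ ^ 2 := by
  intro μ xhat h
  have hsa : 0 < s * a := mul_pos hs ha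
  have hμ : 0 < μ := mul_pos hsa hx
  have hμlt : μ < 1 := hμ1
  set f : ℕ → ℝ := fun k => (xhat k - xstar) ^ 2 * ppmf μ k with hf
  -- basic facts about xhat
  have hxhat_nonneg : ∀ k : ℕ, 0 ≤ xhat k := by
    intro k
    have h1 : s * a ≤ Real.sqrt ((s * a) ^ 2 + 4 * τ * k) := by
      have : (s * a) ^ 2 ≤ (s * a) ^ 2 + 4 * τ * k :=
        le_add_of_nonneg_right (by positivity)
      calc s * a = Real.sqrt ((s * a) ^ 2) := by rw [Real.sqrt_sq hsa.le]
        _ ≤ _ := Real.sqrt_le_sqrt this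
    have : 0 ≤ -(s * a) + Real.sqrt ((s * a) ^ 2 + 4 * τ * k) := by linarith
    exact div_nonneg this (by positivity)
  have hxhat0 : xhat 0 = 0 := by
    show (-(s * a) + Real.sqrt ((s * a) ^ 2 + 4 * τ * (0 : ℕ))) / (2 * τ) = 0
    rw [Nat.cast_zero, mul_zero, add_zero, Real.sqrt_sq hsa.le]
    simp
  have hxhat_le : ∀ k : ℕ, xhat k ≤ k / (s * a) := by
    intro k
    have hk : (0 : ℝ) ≤ (k : ℝ) := Nat.cast_nonneg k
    have h1 : Real.sqrt ((s * a) ^ 2 + 4 * τ * k) ≤ s * a + 2 * τ * k / (s * a) := by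
      have hb : 0 ≤ s * a + 2 * τ * k / (s * a) := by positivity
      have h2 : (s * a) ^ 2 + 4 * τ * k ≤ (s * a + 2 * τ * k / (s * a)) ^ 2 := by
        have hexp : (s * a + 2 * τ * k / (s * a)) ^ 2
            = (s * a) ^ 2 + 4 * τ * k + (2 * τ * k / (s * a)) ^ 2 := by
          field_simp; ring
        nlinarith [sq_nonneg (2 * τ * k / (s * a))]
      calc Real.sqrt ((s * a) ^ 2 + 4 * τ * k)
          ≤ Real.sqrt ((s * a + 2 * τ * k / (s * a)) ^ 2) := Real.sqrt_le_sqrt h2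
        _ = s * a + 2 * τ * k / (s * a) := Real.sqrt_sq hb
    show (-(s * a) + Real.sqrt ((s * a) ^ 2 + 4 * τ * k)) / (2 * τ) ≤ (k : ℝ) / (s * a)
    rw [div_le_iff₀ (by positivity)]
    have : (k : ℝ) / (s * a) * (2 * τ) = 2 * τ * k / (s * a) := by ring
    rw [this]
    linarith
  -- pointwise comparison function for summability
  have hfnonneg : ∀ k, 0 ≤ f k := fun k =>
    mul_nonneg (sq_nonneg _) (ppmf_nonneg hμ.le k)
  have hppmf_le : ∀ k : ℕ, ppmf μ k ≤ μ ^ k := by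
    intro k
    unfold ppmf
    rw [div_le_iff₀ (by positivity : (0:ℝ) < (Nat.factorial k : ℝ))]
    have h1 : Real.exp (-μ) ≤ 1 := Real.exp_le_one_iff.mpr (by linarith)
    have h2 : (1 : ℝ) ≤ (Nat.factorial k : ℝ) := by
      exact_mod_cast Nat.one_le_iff_ne_zero.mpr (Nat.factorial_ne_zero k)
    nlinarith [pow_nonneg hμ.le k]
  have hfle : ∀ k : ℕ, f k ≤ (2 / (s*a)^2) * ((k:ℝ)^2 * μ ^ k)
      + (2 * xstar ^ 2) * μ ^ k := by
    intro k
    have h1 : (xhat k - xstar) ^ 2 ≤ 2 * (xhat k) ^ 2 + 2 * xstar ^ 2 := by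
      nlinarith [sq_nonneg (xhat k + xstar)]
    have h2 : (xhat k) ^ 2 ≤ ((k:ℝ) / (s*a)) ^ 2 := by
      have := hxhat_le k
      have := hxhat_nonneg k
      nlinarith
    have h3 : f k ≤ (2 * ((k:ℝ)/(s*a))^2 + 2 * xstar ^ 2) * ppmf μ k := by
      apply mul_le_mul_of_nonneg_right _ (ppmf_nonneg hμ.le k)
      linarith
    have h4 : (2 * ((k:ℝ)/(s*a))^2 + 2 * xstar ^ 2) * ppmf μ k
        ≤ (2 * ((k:ℝ)/(s*a))^2 + 2 * xstar ^ 2) * μ ^ k := by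
      apply mul_le_mul_of_nonneg_left (hppmf_le k) (by positivity)
    have h5 : (2 * ((k:ℝ)/(s*a))^2 + 2 * xstar ^ 2) * μ ^ k
        = (2 / (s*a)^2) * ((k:ℝ)^2 * μ ^ k) + (2 * xstar ^ 2) * μ ^ k := by
      field_simp
    linarith
  have hnormμ : ‖μ‖ < 1 := by
    rw [Real.norm_eq_abs, abs_of_pos hμ]; exact hμlt
  have hsumg : Summable (fun k : ℕ => (2 / (s*a)^2) * ((k:ℝ)^2 * μ ^ k)
      + (2 * xstar ^ 2) * μ ^ k) := by
    apply Summable.add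
    · exact ((summable_pow_mul_geometric_of_norm_lt_one 2 hnormμ).mul_left _)
    · exact ((summable_geometric_of_norm_lt_one hnormμ).mul_left _)
  have hsumf : Summable f := Summable.of_nonneg_of_le hfnonneg hfle hsumg
  -- split off the first two terms
  have hsum1 : Summable (fun k : ℕ => f (k + 1)) := (summable_nat_add_iff 1).mpr hsumf
  have hsum2 : Summable (fun k : ℕ => f (k + 1 + 1)) := (summable_nat_add_iff 1).mpr hsum1
  have hsplit : (∑' k : ℕ, f k) = f 0 + (f 1 + ∑' k : ℕ, f (k + 1 + 1)) := by
    rw [Summable.tsum_eq_zero_add hsumf, Summable.tsum_eq_zero_add hsum1]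
  -- tail bound: termwise
  have htail_term : ∀ k : ℕ, f (k + 1 + 1)
      ≤ (4 * μ ^ 2 / (s*a)^2 + xstar ^ 2 * μ ^ 2) * ppmf μ k := by
    intro k
    have hratio : ppmf μ (k + 2) * ((k:ℝ)+1) * ((k:ℝ)+2) = μ ^ 2 * ppmf μ k := by
      unfold ppmf
      have hfact : (Nat.factorial (k + 2) : ℝ)
          = ((k:ℝ) + 1) * ((k:ℝ) + 2) * (Nat.factorial k : ℝ) := by
        have : Nat.factorial (k + 2) = (k + 2) * ((k + 1) * Nat.factorial k) := rfl
        rw [this]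
        push_cast
        ring
      rw [hfact]
      have hfk : (0:ℝ) < (Nat.factorial k : ℝ) := by positivity
      field_simp
      ring
    have hp2 : 0 ≤ ppmf μ (k + 2) := ppmf_nonneg hμ.le _
    have hpk : 0 ≤ ppmf μ k := ppmf_nonneg hμ.le _
    have h1 : (xhat (k+2) - xstar) ^ 2 ≤ 2 * (((k:ℝ)+2) / (s*a))^2 + 2 * xstar ^ 2 := by
      have ha1 := hxhat_le (k+2)
      have ha2 := hxhat_nonneg (k+2)
      have hcast : ((k+2 : ℕ) : ℝ) = (k:ℝ) + 2 := by push_cast; ring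
      rw [hcast] at ha1
      have h2 : (xhat (k+2)) ^ 2 ≤ (((k:ℝ)+2) / (s*a)) ^ 2 := by nlinarith
      nlinarith [sq_nonneg (xhat (k+2) + xstar), h2]
    have hkk : f (k + 1 + 1) = (xhat (k+2) - xstar) ^ 2 * ppmf μ (k + 2) := by
      rfl
    rw [hkk]
    -- f(k+2) ≤ (2(k+2)²/(sa)² + 2x²) * ppmf(k+2)
    have hstep1 : (xhat (k+2) - xstar) ^ 2 * ppmf μ (k + 2)
        ≤ (2 * (((k:ℝ)+2) / (s*a))^2 + 2 * xstar ^ 2) * ppmf μ (k + 2) :=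
      mul_le_mul_of_nonneg_right h1 hp2
    -- ppmf(k+2) * (k+1)(k+2) = μ² ppmf(k); derive ppmf(k+2) relationships
    have hk1 : (0:ℝ) < (k:ℝ) + 1 := by positivity
    have hk2 : (0:ℝ) < (k:ℝ) + 2 := by positivity
    have hstep2 : (2 * (((k:ℝ)+2) / (s*a))^2 + 2 * xstar ^ 2) * ppmf μ (k + 2)
        ≤ (4 * μ ^ 2 / (s*a)^2 + xstar ^ 2 * μ ^ 2) * ppmf μ k := by
      -- first piece: 2(k+2)²/(sa)² ppmf(k+2) ≤ 4μ²/(sa)² ppmf(k)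
      have hA : 2 * (((k:ℝ)+2) / (s*a))^2 * ppmf μ (k + 2)
          ≤ 4 * μ ^ 2 / (s*a)^2 * ppmf μ k := by
        have key : 2 * ((k:ℝ)+2)^2 * ppmf μ (k+2) ≤ 4 * (μ^2 * ppmf μ k) := by
          nlinarith [hratio, mul_nonneg hp2 hk2.le, (Nat.cast_nonneg k : (0:ℝ) ≤ (k:ℝ))]
        have e1 : 2 * (((k:ℝ)+2) / (s*a))^2 * ppmf μ (k + 2)
            = (2 * ((k:ℝ)+2)^2 * ppmf μ (k+2)) / (s*a)^2 := by
          rw [div_pow]; ring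
        have e2 : 4 * μ ^ 2 / (s*a)^2 * ppmf μ k = (4 * (μ^2 * ppmf μ k)) / (s*a)^2 := by
          ring
        rw [e1, e2]
        exact (div_le_div_iff_of_pos_right (by positivity)).mpr key
      have hB : 2 * xstar ^ 2 * ppmf μ (k + 2) ≤ xstar ^ 2 * μ ^ 2 * ppmf μ k := by
        have key : 2 * ppmf μ (k+2) ≤ μ^2 * ppmf μ k := by
          have h12 : (2:ℝ) ≤ ((k:ℝ)+1) * ((k:ℝ)+2) := by nlinarith [(Nat.cast_nonneg k : (0:ℝ) ≤ (k:ℝ))]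
          nlinarith [hratio, hp2]
        nlinarith [sq_nonneg xstar]
      nlinarith
    linarith
  have hsumrhs : Summable (fun k : ℕ =>
      (4 * μ ^ 2 / (s*a)^2 + xstar ^ 2 * μ ^ 2) * ppmf μ k) :=
    summable_ppmf.mul_left _
  have htail : (∑' k : ℕ, f (k + 1 + 1))
      ≤ 4 * μ ^ 2 / (s*a)^2 + xstar ^ 2 * μ ^ 2 := by
    calc (∑' k : ℕ, f (k + 1 + 1))
        ≤ ∑' k : ℕ, (4 * μ ^ 2 / (s*a)^2 + xstar ^ 2 * μ ^ 2) * ppmf μ k :=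
          Summable.tsum_le_tsum htail_term hsum2 hsumrhs
      _ = (4 * μ ^ 2 / (s*a)^2 + xstar ^ 2 * μ ^ 2) * ∑' k : ℕ, ppmf μ k :=
          tsum_mul_left
      _ = 4 * μ ^ 2 / (s*a)^2 + xstar ^ 2 * μ ^ 2 := by rw [tsum_ppmf, mul_one]
  -- head terms
  have hppmf0 : ppmf μ 0 = Real.exp (-μ) := by unfold ppmf; simp
  have hppmf1 : ppmf μ 1 = Real.exp (-μ) * μ := by unfold ppmf; simp
  have hf0 : f 0 = xstar ^ 2 * Real.exp (-μ) := by
    show (xhat 0 - xstar) ^ 2 * ppmf μ 0 = _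
    rw [hxhat0, hppmf0]
    ring
  have hf1 : f 1 = (h - xstar) ^ 2 * (Real.exp (-μ) * μ) := by
    show (xhat 1 - xstar) ^ 2 * ppmf μ 1 = _
    rw [hppmf1]
  have hE1 : Real.exp (-μ) * (1 + μ) ≤ 1 := by
    have h1 : 1 + μ ≤ Real.exp μ := by linarith [Real.add_one_le_exp μ]
    have h2 : Real.exp (-μ) * (1 + μ) ≤ Real.exp (-μ) * Real.exp μ :=
      mul_le_mul_of_nonneg_left h1 (Real.exp_nonneg _)
    rw [← Real.exp_add] at h2
    simpa using h2
  have hE0 : 0 < Real.exp (-μ) := Real.exp_pos _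
  have hhead : f 0 + f 1 ≤ xstar ^ 2 + μ * (h ^ 2 - 2 * h * xstar) + xstar ^ 2 * μ ^ 2 := by
    rw [hf0, hf1]
    set E := Real.exp (-μ)
    -- rewrite h² - 2hx = (h-x)² - x²
    have hid : h ^ 2 - 2 * h * xstar = (h - xstar) ^ 2 - xstar ^ 2 := by ring
    rw [hid]
    -- goal: x²E + (h-x)²Eμ ≤ x² + μ((h-x)² - x²) + x²μ²
    have hQ : 0 ≤ 1 - E - μ + μ ^ 2 := by nlinarith [hE1, pow_pos hμ 3, hμ]
    have hE_le : E ≤ 1 := by nlinarith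
    nlinarith [mul_nonneg (mul_nonneg hμ.le (sq_nonneg (h - xstar))) (sub_nonneg.2 hE_le),
      mul_nonneg (sq_nonneg xstar) hQ]
  -- assemble
  rw [hsplit]
  have hfinal : f 0 + f 1 + (∑' k : ℕ, f (k + 1 + 1))
      ≤ xstar ^ 2 + μ * (h ^ 2 - 2 * h * xstar) + xstar ^ 2 * μ ^ 2
        + (4 * μ ^ 2 / (s*a)^2 + xstar ^ 2 * μ ^ 2) := by
    linarith
  have habsorb : xstar ^ 2 * μ ^ 2 ≤ 2 * μ ^ 2 * (h ^ 2 + xstar ^ 2) := by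
    have hh : 0 ≤ h := hxhat_nonneg 1
    nlinarith [sq_nonneg μ, sq_nonneg h, sq_nonneg xstar, sq_nonneg (μ * xstar)]
  linarith
end
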